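/- arXiv:1803.08750 — 3 statements merged into one kernel-verified Lean document; each statement's English description precedes it below -/
import Mathlib

section
/- Let P = span(p₁, p₂) (a Lagrangian plane of (V,Ω)), let 𝔭₁ = {X ∈ sp(V) : X(P) ⊆ P} be its stabilizer, and let S²(P) = {X ∈ sp(V) : X(P) = 0 and X(V) ⊆ P}. Then a Lie subalgebra h ⊆ 𝔭₁ has finite type if and only if the abelian subalgebra a = h ∩ S²(P) has finite type. -/
open Module

abbrev V4 : Type := Fin 4 → ℝ

noncomputable section

def Om (u v : V4) : ℝ :=
  -(u 0 * v 2 - u 2 * v 0) - (u 1 * v 3 - u 3 * v 1)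

def sp4 : Set (Module.End ℝ V4) :=
  {X | ∀ u v : V4, Om (X u) v + Om u (X v) = 0}

def pp1 : V4 := ![1,0,0,0]
def pp2 : V4 := ![0,1,0,0]
def qq1 : V4 := ![0,0,1,0]
def qq2 : V4 := ![0,0,0,1]

lemma Om_add_left (a b v : V4) : Om (a + b) v = Om a v + Om b v := by
  simp [Om]; ring
lemma Om_smul_left (c : ℝ) (a v : V4) : Om (c • a) v = c * Om a v := by
  simp [Om]; ring
lemma Om_add_right (u a b : V4) : Om u (a + b) = Om u a + Om u b := by
  simp [Om]; ring
lemma Om_smul_right (c : ℝ) (u a : V4) : Om u (c • a) = c * Om u a := by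
  simp [Om]; ring

def quad (u v : V4) : Module.End ℝ V4 where
  toFun w := Om u w • v + Om v w • u
  map_add' a b := by
    try simp only []
    rw [Om_add_right, Om_add_right, add_smul, add_smul]; abel
  map_smul' c a := by
    try simp only []
    rw [Om_smul_right, Om_smul_right, RingHom.id_apply, mul_smul, mul_smul, smul_add]

def InProl (h : Set (Module.End ℝ V4)) (k : ℕ)
    (T : MultilinearMap ℝ (fun _ : Fin (k+1) => V4) V4) : Prop :=
  (∀ (σ : Equiv.Perm (Fin (k+1))) (v : Fin (k+1) → V4), (T fun i => v (σ i)) = T v) ∧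
  (∀ v : Fin k → V4, ∃ A ∈ h, ∀ w : V4, A w = T (Fin.snoc v w))

def FiniteType (h : Set (Module.End ℝ V4)) : Prop :=
  ∃ k : ℕ, 1 ≤ k ∧
    ∀ T : MultilinearMap ℝ (fun _ : Fin (k+1) => V4) V4, InProl h k T → T = 0

/-- The Lagrangian plane `P = span(p₁,p₂)`. -/
def Pplane : Submodule ℝ V4 := Submodule.span ℝ {pp1, pp2}

/-- The maximal parabolic `𝔭₁ = {X ∈ sp(V) : X(P) ⊆ P}`. -/
def par1 : Set (Module.End ℝ V4) := {X ∈ sp4 | ∀ w ∈ Pplane, X w ∈ Pplane}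

/-- `S²(P) = {X ∈ sp(V) : X(P) = 0 and X(V) ⊆ P}`. -/
def S2P : Set (Module.End ℝ V4) :=
  {X ∈ sp4 | (∀ w ∈ Pplane, X w = 0) ∧ (∀ w : V4, X w ∈ Pplane)}

/-!
Every `X ∈ 𝔭₁` preserves the Lagrangian plane `P`, and `P` is its own `Ω`-orthogonal. For `T` in the
`(k+1)`-st prolongation of `h ⊆ 𝔭₁` and `p, p' ∈ P`, symmetry of `T` and the `sp`-condition give
`Ω(T(p,…,p'), u) = Ω(T(p,…,u), p') = Ω(T(u,…,p), p') = 0`, so `T` vanishes as soon as two of its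
arguments lie in `P`. Hence each contraction `T(p, ·)` with `p ∈ P` is an element of `a^(k)`; if
`a^(k) = 0`, then `T` vanishes whenever one argument lies in `P`, i.e. all the endomorphisms
`T(v, ·)` lie in `S²(P)`, so `T ∈ a^(k+1) = 0`. The converse holds because `a ⊆ h`.
-/

lemma Om_skew (u v : V4) : Om u v = -Om v u := by
  simp only [Om]; ring

lemma eq_zero_of_forall_Om_eq_zero {x : V4} (hx : ∀ u : V4, Om x u = 0) : x = 0 := by
  funext i
  fin_cases i
  · simpa [Om, qq1] using hx qq1
  · simpa [Om, qq2] using hx qq2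
  · simpa [Om, pp1] using hx pp1
  · simpa [Om, pp2] using hx pp2

lemma pp1_mem_Pplane : pp1 ∈ Pplane := Submodule.subset_span (by simp)

lemma pp2_mem_Pplane : pp2 ∈ Pplane := Submodule.subset_span (by simp)

lemma mem_Pplane_iff {x : V4} : x ∈ Pplane ↔ x 2 = 0 ∧ x 3 = 0 := by
  constructor
  · intro hx
    induction hx using Submodule.span_induction with
    | mem y hy => rcases hy with rfl | rfl <;> simp [pp1, pp2]
    | zero => simp
    | add y z _ _ hy hz => simp [hy.1, hy.2, hz.1, hz.2]
    | smul c y _ hy => simp [hy.1, hy.2]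
  · rintro ⟨h2, h3⟩
    have hx : x = x 0 • pp1 + x 1 • pp2 := by
      funext i; fin_cases i <;> simp [pp1, pp2, h2, h3]
    rw [hx]
    exact add_mem (Submodule.smul_mem _ _ pp1_mem_Pplane) (Submodule.smul_mem _ _ pp2_mem_Pplane)

lemma Om_eq_zero_of_mem_Pplane {p p' : V4} (hp : p ∈ Pplane) (hp' : p' ∈ Pplane) :
    Om p p' = 0 := by
  rw [mem_Pplane_iff] at hp hp'
  simp [Om, hp.1, hp.2, hp'.1, hp'.2]

lemma mem_Pplane_of_Om_pp1_pp2 {x : V4} (h1 : Om x pp1 = 0) (h2 : Om x pp2 = 0) :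
    x ∈ Pplane :=
  mem_Pplane_iff.2 ⟨by simpa [Om, pp1] using h1, by simpa [Om, pp2] using h2⟩

lemma Om_apply_comm_of_mem_sp4 {A : Module.End ℝ V4} (hA : A ∈ sp4) (u v : V4) :
    Om (A u) v = Om (A v) u := by
  linarith [hA u v, Om_skew u (A v)]

lemma mem_S2P_of_mem_sp4 {A : Module.End ℝ V4} (hA : A ∈ sp4)
    (hP : ∀ p ∈ Pplane, A p = 0) : A ∈ S2P := by
  refine ⟨hA, hP, fun w => mem_Pplane_of_Om_pp1_pp2 ?_ ?_⟩
  · rw [Om_apply_comm_of_mem_sp4 hA, hP pp1 pp1_mem_Pplane]; simp [Om]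
  · rw [Om_apply_comm_of_mem_sp4 hA, hP pp2 pp2_mem_Pplane]; simp [Om]

lemma snoc_cons_comp_swap {α : Type*} {n : ℕ} (a b : α) (w : Fin n → α) :
    (fun i => (Fin.snoc (Fin.cons a w) b : Fin (n + 1 + 1) → α) (Equiv.swap 0 (Fin.last (n + 1)) i))
      = Fin.snoc (Fin.cons b w) a := by
  funext i
  refine Fin.lastCases ?_ (fun j => Fin.cases ?_ (fun j => ?_) j) i
  · simp
  · simp
  · rw [Equiv.swap_apply_of_ne_of_ne (by simp [Fin.ext_iff]) (Fin.castSucc_ne_last _)]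
    simp only [Fin.snoc_castSucc, Fin.cons_succ]

lemma cons_comp_decomposeFin_symm {α : Type*} {n : ℕ} (σ : Equiv.Perm (Fin n)) (x : α)
    (v : Fin n → α) :
    (fun i => (Fin.cons x v : Fin (n + 1) → α) (Equiv.Perm.decomposeFin.symm (0, σ) i))
      = Fin.cons x (fun i => v (σ i)) := by
  funext i
  induction i using Fin.cases with
  | zero => simp [Equiv.Perm.decomposeFin_symm_apply_zero]
  | succ j => simp [Equiv.Perm.decomposeFin_symm_apply_succ]

def ProlVanishes (s : Set (Module.End ℝ V4)) (k : ℕ) : Prop :=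
  ∀ T : MultilinearMap ℝ (fun _ : Fin (k + 1) => V4) V4, InProl s k T → T = 0

section Prolongation

variable {s t : Set (Module.End ℝ V4)} {k : ℕ}

lemma InProl.mono {T : MultilinearMap ℝ (fun _ : Fin (k + 1) => V4) V4} (hT : InProl s k T)
    (hst : s ⊆ t) : InProl t k T :=
  ⟨hT.1, fun v => let ⟨A, hA, hAw⟩ := hT.2 v; ⟨A, hst hA, hAw⟩⟩

lemma ProlVanishes.anti (ht : ProlVanishes t k) (hst : s ⊆ t) : ProlVanishes s k :=
  fun T hT => ht T (hT.mono hst)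

lemma FiniteType.subset (ht : FiniteType t) (hst : s ⊆ t) : FiniteType s :=
  let ⟨k, hk, hvan⟩ := ht
  ⟨k, hk, ProlVanishes.anti hvan hst⟩

lemma InProl.apply_snoc_cons_comm {T : MultilinearMap ℝ (fun _ : Fin (k + 1 + 1) => V4) V4}
    (hT : InProl s (k + 1) T) (a b : V4) (w : Fin k → V4) :
    T (Fin.snoc (Fin.cons a w) b) = T (Fin.snoc (Fin.cons b w) a) := by
  rw [← snoc_cons_comp_swap, hT.1]

lemma InProl.curryLeft {T : MultilinearMap ℝ (fun _ : Fin (k + 1 + 1) => V4) V4}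
    (hT : InProl s (k + 1) T) (x : V4) : InProl s k (T.curryLeft x) := by
  refine ⟨fun σ v => ?_, fun v => ?_⟩
  · simp only [MultilinearMap.curryLeft_apply]
    rw [← cons_comp_decomposeFin_symm, hT.1]
  · obtain ⟨A, hA, hAw⟩ := hT.2 (Fin.cons x v)
    refine ⟨A, hA, fun w => ?_⟩
    rw [hAw, MultilinearMap.curryLeft_apply, Fin.cons_snoc_eq_snoc_cons]

lemma ProlVanishes.succ (hvan : ProlVanishes s k) : ProlVanishes s (k + 1) := by
  intro T hT
  refine MultilinearMap.ext fun m => ?_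
  rw [← Fin.cons_self_tail m, ← MultilinearMap.curryLeft_apply, hvan _ (hT.curryLeft _)]
  rfl

lemma InProl.apply_snoc_cons_eq_zero (hsub : s ⊆ par1)
    {T : MultilinearMap ℝ (fun _ : Fin (k + 1 + 1) => V4) V4} (hT : InProl s (k + 1) T)
    {p p' : V4} (hp : p ∈ Pplane) (hp' : p' ∈ Pplane) (v : Fin k → V4) :
    T (Fin.snoc (Fin.cons p v) p') = 0 := by
  refine eq_zero_of_forall_Om_eq_zero fun u => ?_
  obtain ⟨A, hA, hAw⟩ := hT.2 (Fin.cons p v)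
  obtain ⟨B, hB, hBw⟩ := hT.2 (Fin.cons u v)
  calc Om (T (Fin.snoc (Fin.cons p v) p')) u = Om (A p') u := by rw [hAw]
    _ = Om (A u) p' := Om_apply_comm_of_mem_sp4 (hsub hA).1 _ _
    _ = Om (B p) p' := by rw [hAw, hBw, hT.apply_snoc_cons_comm]
    _ = 0 := Om_eq_zero_of_mem_Pplane ((hsub hB).2 p hp) hp'

lemma InProl.inter_S2P (hs : s ⊆ sp4) {T : MultilinearMap ℝ (fun _ : Fin (k + 1) => V4) V4}
    (hT : InProl s k T) (hP : ∀ v p, p ∈ Pplane → T (Fin.snoc v p) = 0) :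
    InProl (s ∩ S2P) k T := by
  refine ⟨hT.1, fun v => ?_⟩
  obtain ⟨A, hA, hAw⟩ := hT.2 v
  exact ⟨A, ⟨hA, mem_S2P_of_mem_sp4 (hs hA) fun p hp => by rw [hAw, hP v p hp]⟩, hAw⟩

lemma ProlVanishes.of_inter_S2P (hsub : s ⊆ par1) (hvan : ProlVanishes (s ∩ S2P) k) :
    ProlVanishes s (k + 1) := by
  have hsp : s ⊆ sp4 := fun _ hA => (hsub hA).1
  intro T hT
  have hcurry : ∀ p ∈ Pplane, T.curryLeft p = 0 := fun p hp =>
    hvan _ <| (hT.curryLeft p).inter_S2P hsp fun v p' hp' => by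
      rw [MultilinearMap.curryLeft_apply, Fin.cons_snoc_eq_snoc_cons]
      exact hT.apply_snoc_cons_eq_zero hsub hp hp' v
  have hlast : ∀ v p, p ∈ Pplane → T (Fin.snoc v p) = 0 := by
    intro v p hp
    rw [← Fin.cons_self_tail v, hT.apply_snoc_cons_comm, ← Fin.cons_snoc_eq_snoc_cons,
      ← MultilinearMap.curryLeft_apply, hcurry p hp]
    rfl
  exact hvan.succ T (hT.inter_S2P hsp hlast)

end Prolongation

attribute [local instance 100] LieRing.ofAssociativeRing

/-- a subalgebra `h ⊆ 𝔭₁` has finite type iff `h ∩ S²(P)` has finite type. -/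
theorem finite_type_in_par1_iff
    (h : LieSubalgebra ℝ (Module.End ℝ V4))
    (hsub : (h : Set (Module.End ℝ V4)) ⊆ par1) :
    FiniteType (h : Set (Module.End ℝ V4)) ↔
      FiniteType ((h : Set (Module.End ℝ V4)) ∩ S2P) :=
  ⟨fun hf => hf.subset Set.inter_subset_left,
    fun ⟨k, hk, hvan⟩ => ⟨k + 1, by omega, ProlVanishes.of_inter_S2P hsub hvan⟩⟩
end
end

section
/- Let x₁, x₂, x₃ ∈ R with (x₁, x₂, x₃) ≠ (0,0,0), and let X = x₁·p₁² + x₂·p₁p₂ + x₃·p₂² ∈ sp(V); explicitly, X(q₁) = -2x₁p₁ - x₂p₂, X(q₂) = -x₂p₁ - 2x₃p₂, X(p₁) = X(p₂) = 0. Then the one-dimensional Lie subalgebra R·X of sp(V) has infinite type if and only if x₂² = 4·x₁·x₃. -/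
open Module

noncomputable section

/-!
A line `ℝ X` has infinite type exactly when `X` has rank one. If `X = φ ⊗ u`, then
`(v₀, …, vₖ) ↦ φ(v₀) ⋯ φ(vₖ) u` lies in the `k`-th prolongation for every `k`. If `X` has rank at
least two, the first prolongation already vanishes. In `sp(V)` the rank-one elements are the
squares `u²`, and `x₁ p₁² + x₂ p₁p₂ + x₃ p₂²` is a multiple of a square (`(2x₁p₁ + x₂p₂)²` or
`(x₂p₁ + 2x₃p₂)²`) exactly when `x₂² = 4x₁x₃`; otherwise its values on `q₁, q₂` are independent.
-/

def omL (u : V4) : V4 →ₗ[ℝ] ℝ where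
  toFun := Om u
  map_add' := Om_add_right u
  map_smul' c a := Om_smul_right c u a

lemma omL_ne_zero {u : V4} (hu : u ≠ 0) : omL u ≠ 0 := by
  contrapose! hu
  have h : ∀ w, Om u w = 0 := fun w => LinearMap.congr_fun hu w
  have h0 := h qq1
  have h1 := h qq2
  have h2 := h pp1
  have h3 := h pp2
  simp only [Om, qq1, qq2, pp1, pp2] at h0 h1 h2 h3
  ext i
  fin_cases i <;> simp_all

lemma quad_self_eq_smulRight (u : V4) : quad u u = (omL u).smulRight (2 • u) := by
  refine LinearMap.ext fun w => ?_
  simp only [quad, omL, LinearMap.coe_mk, AddHom.coe_mk, LinearMap.smulRight_apply]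
  module

lemma quad_add_self (a b : ℝ) (p q : V4) :
    quad (a • p + b • q) (a • p + b • q) =
      a ^ 2 • quad p p + (2 * a * b) • quad p q + b ^ 2 • quad q q := by
  refine LinearMap.ext fun w => ?_
  simp only [quad, LinearMap.add_apply, LinearMap.smul_apply, LinearMap.coe_mk, AddHom.coe_mk,
    Om_add_left, Om_smul_left]
  module

def rankOneTensor (k : ℕ) (φ : V4 →ₗ[ℝ] ℝ) (u : V4) :
    MultilinearMap ℝ (fun _ : Fin (k + 1) => V4) V4 :=
  (MultilinearMap.mkPiRing ℝ (Fin (k + 1)) u).compLinearMap fun _ => φ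

lemma rankOneTensor_apply (k : ℕ) (φ : V4 →ₗ[ℝ] ℝ) (u : V4) (v : Fin (k + 1) → V4) :
    rankOneTensor k φ u v = (∏ i, φ (v i)) • u := by
  simp [rankOneTensor]

lemma rankOneTensor_ne_zero (k : ℕ) {φ : V4 →ₗ[ℝ] ℝ} {u : V4} (hφ : φ ≠ 0) (hu : u ≠ 0) :
    rankOneTensor k φ u ≠ 0 := by
  obtain ⟨w, hw⟩ := DFunLike.ne_iff.1 hφ
  intro h
  have h0 := congrArg (fun T => T fun _ => w) h
  simp only [rankOneTensor_apply, Finset.prod_const, Finset.card_univ, Fintype.card_fin,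
    zero_apply, smul_eq_zero] at h0
  exact h0.elim (fun h => hw (pow_eq_zero_iff k.succ_ne_zero |>.1 h)) hu

lemma inProl_rankOneTensor (h : Submodule ℝ (Module.End ℝ V4)) (k : ℕ) {φ : V4 →ₗ[ℝ] ℝ}
    {u : V4} (hmem : φ.smulRight u ∈ h) : InProl h k (rankOneTensor k φ u) := by
  refine ⟨fun σ v => ?_, fun v => ⟨(∏ i, φ (v i)) • φ.smulRight u, h.smul_mem _ hmem, fun w => ?_⟩⟩
  · simp only [rankOneTensor_apply, Equiv.prod_comp σ fun i => φ (v i)]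
  · rw [rankOneTensor_apply, Fin.prod_univ_castSucc]
    simp [mul_smul]

theorem not_finiteType_of_smulRight_mem (h : Submodule ℝ (Module.End ℝ V4))
    {φ : V4 →ₗ[ℝ] ℝ} {u : V4} (hφ : φ ≠ 0) (hu : u ≠ 0) (hmem : φ.smulRight u ∈ h) :
    ¬ FiniteType h := by
  rintro ⟨k, -, hk⟩
  exact rankOneTensor_ne_zero k hφ hu (hk _ (inProl_rankOneTensor h k hmem))

theorem not_finiteType_of_quad_self_mem (h : Submodule ℝ (Module.End ℝ V4)) {u : V4}
    (hu : u ≠ 0) (hmem : quad u u ∈ h) : ¬ FiniteType h := by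
  rw [quad_self_eq_smulRight] at hmem
  exact not_finiteType_of_smulRight_mem h (omL_ne_zero hu) (smul_ne_zero two_ne_zero hu) hmem

lemma fin_two_eq_vecCons (v : Fin 2 → V4) : v = ![v 0, v 1] := by
  ext i : 1
  fin_cases i <;> rfl

lemma InProl.one_symm {h : Set (Module.End ℝ V4)}
    {T : MultilinearMap ℝ (fun _ : Fin 2 => V4) V4} (hT : InProl h 1 T) (a b : V4) :
    T ![a, b] = T ![b, a] := by
  rw [← hT.1 (Equiv.swap 0 1) ![b, a]]
  congr 1
  ext i : 1
  fin_cases i <;> rfl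

lemma InProl.one_span_singleton {X : Module.End ℝ V4}
    {T : MultilinearMap ℝ (fun _ : Fin 2 => V4) V4}
    (hT : InProl (Submodule.span ℝ {X} : Set (Module.End ℝ V4)) 1 T) (a : V4) :
    ∃ c : ℝ, ∀ w, T ![a, w] = c • X w := by
  obtain ⟨A, hA, hAw⟩ := hT.2 ![a]
  obtain ⟨c, rfl⟩ := Submodule.mem_span_singleton.1 hA
  refine ⟨c, fun w => ?_⟩
  rw [← LinearMap.smul_apply, hAw, fin_two_eq_vecCons (Fin.snoc _ w)]
  rfl

-- `T(a, w) = c(a) • X w`, and symmetry of `T` gives `c(a) • X b = c(b) • X a`.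
theorem finiteType_span_singleton_of_linearIndependent {X : Module.End ℝ V4} {a b : V4}
    (hab : LinearIndependent ℝ ![X a, X b]) :
    FiniteType (Submodule.span ℝ {X} : Set (Module.End ℝ V4)) := by
  refine ⟨1, le_rfl, fun T hT => ?_⟩
  choose c hc using hT.one_span_singleton
  have hsymm : ∀ v w, c v • X w = c w • X v := fun v w => by
    rw [← hc, ← hc, hT.one_symm]
  have hcab : c b = 0 ∧ -c a = 0 := LinearIndependent.pair_iff.1 hab (c b) (-c a) <| by
    rw [neg_smul, hsymm, add_neg_cancel]
  have hc0 : ∀ v, c v = 0 := fun v => by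
    have hv : c v • X a = 0 := by rw [hsymm, neg_eq_zero.1 hcab.2, zero_smul]
    exact (smul_eq_zero.1 hv).resolve_right (hab.ne_zero 0)
  refine MultilinearMap.ext fun m => ?_
  rw [fin_two_eq_vecCons m, hc, hc0, zero_smul]
  rfl

def quadP (x₁ x₂ x₃ : ℝ) : Module.End ℝ V4 :=
  x₁ • quad pp1 pp1 + x₂ • quad pp1 pp2 + x₃ • quad pp2 pp2

lemma linearIndependent_quadP_apply_qq {x₁ x₂ x₃ : ℝ} (hdisc : x₂ ^ 2 ≠ 4 * x₁ * x₃) :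
    LinearIndependent ℝ ![quadP x₁ x₂ x₃ qq1, quadP x₁ x₂ x₃ qq2] := by
  refine LinearIndependent.pair_iff.2 fun s t hst => ?_
  have e0 : 2 * x₁ * s + x₂ * t = 0 := by
    linear_combination (norm := skip) -congrFun hst 0
    simp [quadP, quad, Om, pp1, pp2, qq1, qq2]
    ring
  have e1 : x₂ * s + 2 * x₃ * t = 0 := by
    linear_combination (norm := skip) -congrFun hst 1
    simp [quadP, quad, Om, pp1, pp2, qq1, qq2]
    ring
  have hs : s * (x₂ ^ 2 - 4 * x₁ * x₃) = 0 := by linear_combination x₂ * e1 - 2 * x₃ * e0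
  have ht : t * (x₂ ^ 2 - 4 * x₁ * x₃) = 0 := by linear_combination x₂ * e0 - 2 * x₁ * e1
  have hd : x₂ ^ 2 - 4 * x₁ * x₃ ≠ 0 := sub_ne_zero.2 hdisc
  exact ⟨(mul_eq_zero.1 hs).resolve_right hd, (mul_eq_zero.1 ht).resolve_right hd⟩

lemma exists_quad_self_eq_smul_quadP {x₁ x₂ x₃ : ℝ} (hne : ¬(x₁ = 0 ∧ x₂ = 0 ∧ x₃ = 0))
    (hdisc : x₂ ^ 2 = 4 * x₁ * x₃) :
    ∃ u : V4, u ≠ 0 ∧ ∃ r : ℝ, quad u u = r • quadP x₁ x₂ x₃ := by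
  by_cases hx₁ : x₁ = 0
  · have hx₂ : x₂ = 0 := pow_eq_zero_iff two_ne_zero |>.1 (by rw [hdisc, hx₁]; ring)
    have hx₃ : x₃ ≠ 0 := fun hx₃ => hne ⟨hx₁, hx₂, hx₃⟩
    refine ⟨x₂ • pp1 + (2 * x₃) • pp2, fun hu => ?_, 4 * x₃, ?_⟩
    · simpa [pp1, pp2, hx₃] using congrFun hu 1
    · rw [quad_add_self, quadP]
      linear_combination (norm := module) hdisc • quad pp1 pp1
  · refine ⟨(2 * x₁) • pp1 + x₂ • pp2, fun hu => ?_, 4 * x₁, ?_⟩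
    · simpa [pp1, pp2, hx₁] using congrFun hu 0
    · rw [quad_add_self, quadP]
      linear_combination (norm := module) hdisc • quad pp2 pp2

/-- the line spanned by `X = x₁p₁² + x₂p₁p₂ + x₃p₂² ∈ sp(V)` has infinite
type if and only if `x₂² = 4x₁x₃`. -/
theorem line_in_S2P_infinite_type_iff
    (x₁ x₂ x₃ : ℝ) (hne : ¬(x₁ = 0 ∧ x₂ = 0 ∧ x₃ = 0)) :
    ¬ FiniteType
        ((Submodule.span ℝ
          {x₁ • quad pp1 pp1 + x₂ • quad pp1 pp2 + x₃ • quad pp2 pp2} :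
            Submodule ℝ (Module.End ℝ V4)) : Set (Module.End ℝ V4)) ↔
      x₂ ^ 2 = 4 * x₁ * x₃ := by
  change ¬ FiniteType (Submodule.span ℝ {quadP x₁ x₂ x₃} : Set (Module.End ℝ V4)) ↔ _
  refine ⟨fun hinf => ?_, fun hdisc => ?_⟩
  · by_contra hdisc
    exact hinf (finiteType_span_singleton_of_linearIndependent
      (linearIndependent_quadP_apply_qq hdisc))
  · obtain ⟨u, hu, r, hr⟩ := exists_quad_self_eq_smul_quadP hne hdisc
    exact not_finiteType_of_quad_self_mem _ hu
      (hr ▸ Submodule.smul_mem _ r (Submodule.mem_span_singleton_self _))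
end
end

section
/- Let P = span(p₁, p₂) and S²(P) = {X ∈ sp(V) : X(P) = 0 and X(V) ⊆ P}, a 3-dimensional abelian Lie subalgebra of sp(V). Then every 2-dimensional linear subspace of S²(P) (which is automatically an abelian Lie subalgebra) has infinite type. -/
/-!
An element of `S²(P)` is a symmetric matrix `[[a, b], [b, c]]` from `span(q₁, q₂)` to `P`, so a
plane `W ⊆ S²(P)` is cut out by one linear equation `φ(a, b, c) = 0`. In the coordinates `x, y`
dual to `q₁, q₂`, polarize the `P`-valued form `∑ₘ (n choose m) xᵐ yⁿ⁻ᵐ (c_{m+1} p₁ + c_m p₂)` of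
degree `n = k + 1`: fixing all arguments but one yields combinations of the matrices
`[[c_{j+2}, c_{j+1}], [c_{j+1}, c_j]]`, `j ≤ k`, so the tensor lies in the `k`-th prolongation of
`W` once `φ(c_{j+2}, c_{j+1}, c_j) = 0` for `j ≤ k`. These are `k + 1` linear equations in the
`k + 3` unknowns `c₀, …, c_{k+2}`, so they have a nonzero solution; the tensor is then nonzero,
as its value on `m` copies of `q₁` and `n - m` copies of `q₂` is `c_{m+1} p₁ + c_m p₂`.
-/

open Module

noncomputable section

lemma Submodule.exists_dual_ker_le {K E : Type*} [Field K] [AddCommGroup E] [Module K E]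
    [FiniteDimensional K E] (N : Submodule K E) (hN : finrank K E ≤ finrank K N + 1) :
    ∃ φ : Module.Dual K E, LinearMap.ker φ ≤ N := by
  rcases eq_or_ne N ⊤ with rfl | hN_top
  · exact ⟨0, le_top⟩
  obtain ⟨φ, hφ, hmap⟩ := Submodule.exists_dual_map_eq_bot_of_lt_top hN_top.lt_top inferInstance
  have hle : N ≤ LinearMap.ker φ := LinearMap.le_ker_iff_map.mpr hmap
  have hlt : finrank K (LinearMap.ker φ) < finrank K E :=
    Submodule.finrank_lt (mt LinearMap.ker_eq_top.mp hφ)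
  exact ⟨φ, (Submodule.eq_of_le_of_finrank_le hle (by omega)).ge⟩

lemma exists_ne_zero_recurrence_solution {K : Type*} [Field K] (φ : Module.Dual K (Fin 3 → K))
    (k : ℕ) :
    ∃ c : ℕ → K, (∃ j ≤ k + 2, c j ≠ 0) ∧ ∀ j ≤ k, φ ![c (j + 2), c (j + 1), c j] = 0 := by
  let window (j : ℕ) : (ℕ → K) →ₗ[K] Fin 3 → K :=
    LinearMap.pi ![LinearMap.proj (j + 2), LinearMap.proj (j + 1), LinearMap.proj j]
  have window_apply (j : ℕ) (c : ℕ → K) : window j c = ![c (j + 2), c (j + 1), c j] := by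
    funext i; fin_cases i <;> rfl
  let L : (Fin (k + 3) → K) →ₗ[K] Fin (k + 1) → K :=
    LinearMap.pi fun j : Fin (k + 1) =>
      φ ∘ₗ window j ∘ₗ Function.ExtendByZero.linearMap K Fin.val
  obtain ⟨d, hdL, hd0⟩ := Submodule.exists_mem_ne_zero_of_ne_bot
    (L.ker_ne_bot_of_finrank_lt (by simp))
  obtain ⟨i, hi⟩ := Function.ne_iff.mp hd0
  refine ⟨Function.extend Fin.val d 0, ⟨i, by omega, ?_⟩, fun j hj => ?_⟩
  · rwa [Fin.val_injective.extend_apply]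
  · simpa [L, window_apply] using congrFun (LinearMap.mem_ker.mp hdL) ⟨j, by omega⟩

section BinomialTensor

open Finset

variable {R V M : Type*} [CommRing R] [AddCommGroup V] [Module R V] [AddCommGroup M] [Module R M]

def zeroCount {n : ℕ} (s : Fin n → Fin 2) : ℕ := #{i | s i = 0}

lemma zeroCount_le {n : ℕ} (s : Fin n → Fin 2) : zeroCount s ≤ n :=
  (card_filter_le _ _).trans_eq (card_fin n)

lemma zeroCount_comp_perm {n : ℕ} (s : Fin n → Fin 2) (σ : Equiv.Perm (Fin n)) :
    zeroCount (s ∘ σ) = zeroCount s :=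
  card_equiv σ (by simp)

lemma zeroCount_snoc {n : ℕ} (s : Fin n → Fin 2) (b : Fin 2) :
    zeroCount (Fin.snoc s b : Fin (n + 1) → Fin 2) = zeroCount s + if b = 0 then 1 else 0 := by
  rw [zeroCount, zeroCount, card_filter, card_filter, Fin.sum_univ_castSucc]
  simp

lemma exists_zeroCount_eq {n m : ℕ} (hm : m ≤ n) : ∃ s : Fin n → Fin 2, zeroCount s = m := by
  induction n generalizing m with
  | zero => exact ⟨Fin.elim0, by simp [zeroCount, Nat.le_zero.mp hm]⟩
  | succ n ih =>
    rcases hm.lt_or_eq with hm | rfl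
    · obtain ⟨s, hs⟩ := ih (Nat.le_of_lt_succ hm)
      exact ⟨Fin.snoc s 1, by simp [zeroCount_snoc, hs]⟩
    · obtain ⟨s, hs⟩ := ih le_rfl
      exact ⟨Fin.snoc s 0, by simp [zeroCount_snoc, hs]⟩

/-- For dual coordinates `x = ℓ 0`, `y = ℓ 1`, the polarization of the `M`-valued form
`∑ₘ (n choose m) xᵐ yⁿ⁻ᵐ u m`. -/
def binomialTensor (ℓ : Fin 2 → Module.Dual R V) (u : ℕ → M) (n : ℕ) :
    MultilinearMap R (fun _ : Fin n => V) M :=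
  ∑ s : Fin n → Fin 2,
    (MultilinearMap.mkPiRing R (Fin n) (u (zeroCount s))).compLinearMap fun i => ℓ (s i)

variable (ℓ : Fin 2 → Module.Dual R V) (u : ℕ → M)

lemma binomialTensor_apply (n : ℕ) (v : Fin n → V) :
    binomialTensor ℓ u n v = ∑ s : Fin n → Fin 2, (∏ i, ℓ (s i) (v i)) • u (zeroCount s) := by
  simp [binomialTensor]

lemma binomialTensor_comp_perm (n : ℕ) (σ : Equiv.Perm (Fin n)) (v : Fin n → V) :
    binomialTensor ℓ u n (v ∘ σ) = binomialTensor ℓ u n v := by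
  simp only [binomialTensor_apply]
  refine Fintype.sum_equiv (σ.arrowCongr (Equiv.refl _)) _ _ fun s => ?_
  change _ = (∏ i, ℓ (s (σ.symm i)) (v i)) • u (zeroCount (s ∘ σ.symm))
  rw [zeroCount_comp_perm, ← Equiv.prod_comp σ fun i => ℓ (s (σ.symm i)) (v i)]
  simp

lemma binomialTensor_snoc (k : ℕ) (v : Fin k → V) (w : V) :
    binomialTensor ℓ u (k + 1) (Fin.snoc v w) = ∑ s : Fin k → Fin 2,
      (∏ i, ℓ (s i) (v i)) • (ℓ 0 w • u (zeroCount s + 1) + ℓ 1 w • u (zeroCount s)) := by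
  rw [binomialTensor_apply, ← (Fin.snocEquiv fun _ => Fin 2).sum_comp, Fintype.sum_prod_type,
    Fin.sum_univ_two, ← sum_add_distrib]
  refine sum_congr rfl fun s _ => ?_
  have hsnoc (b : Fin 2) : (Fin.snocEquiv fun _ => Fin 2) (b, s) = Fin.snoc s b := rfl
  simp [hsnoc, Fin.prod_univ_castSucc, zeroCount_snoc, smul_add, mul_smul]

lemma binomialTensor_apply_comp_of_dual {e : Fin 2 → V}
    (he : ∀ a b, ℓ a (e b) = if a = b then 1 else 0) {n : ℕ} (s : Fin n → Fin 2) :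
    binomialTensor ℓ u n (e ∘ s) = u (zeroCount s) := by
  simp [binomialTensor_apply, he, prod_boole, ← funext_iff]

end BinomialTensor

def qCoord : Fin 2 → Module.Dual ℝ V4 := ![LinearMap.proj 2, LinearMap.proj 3]

lemma qCoord_apply_qq (a b : Fin 2) : qCoord a (![qq1, qq2] b) = if a = b then 1 else 0 := by
  fin_cases a <;> fin_cases b <;> rfl

def symmToEnd : (Fin 3 → ℝ) →ₗ[ℝ] Module.End ℝ V4 :=
  Fintype.linearCombination ℝ ![(qCoord 0).smulRight pp1,
    (qCoord 1).smulRight pp1 + (qCoord 0).smulRight pp2, (qCoord 1).smulRight pp2]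

lemma symmToEnd_apply (v : Fin 3 → ℝ) (w : V4) :
    symmToEnd v w = (v 0 * w 2 + v 1 * w 3) • pp1 + (v 1 * w 2 + v 2 * w 3) • pp2 := by
  simp only [symmToEnd, qCoord, Fintype.linearCombination_apply, Fin.sum_univ_three,
    Matrix.cons_val_zero, Matrix.cons_val_one, Matrix.cons_val, LinearMap.add_apply,
    LinearMap.smul_apply, LinearMap.coe_smulRight, LinearMap.coe_proj, Function.eval]
  module

lemma eq_smul_add_smul_of_mem_Pplane {w : V4} (hw : w ∈ Pplane) : w = w 0 • pp1 + w 1 • pp2 := by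
  obtain ⟨a, b, rfl⟩ := Submodule.mem_span_pair.mp hw
  funext i; fin_cases i <;> simp [pp1, pp2]

lemma eq_sum_smul_basis (w : V4) : w = w 0 • pp1 + w 1 • pp2 + w 2 • qq1 + w 3 • qq2 := by
  funext i; fin_cases i <;> simp [pp1, pp2, qq1, qq2]

lemma mem_range_symmToEnd_of_mem_S2P {X : Module.End ℝ V4} (hX : X ∈ S2P) :
    X ∈ LinearMap.range symmToEnd := by
  obtain ⟨hsp, hker, him⟩ := hX
  have hsymm : X qq2 0 = X qq1 1 := by
    have := hsp qq1 qq2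
    simp only [Om, qq1, qq2, Matrix.cons_val, Matrix.cons_val_zero, Matrix.cons_val_one] at this ⊢
    linarith
  refine ⟨![X qq1 0, X qq1 1, X qq2 1], LinearMap.ext fun w => ?_⟩
  have hXw :
      X w = w 2 • (X qq1 0 • pp1 + X qq1 1 • pp2) + w 3 • (X qq2 0 • pp1 + X qq2 1 • pp2) := by
    rw [← eq_smul_add_smul_of_mem_Pplane (him qq1), ← eq_smul_add_smul_of_mem_Pplane (him qq2)]
    conv_lhs => rw [eq_sum_smul_basis w]
    simp [hker _ (Submodule.subset_span (Set.mem_insert _ _)),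
      hker _ (Submodule.subset_span (Set.mem_insert_of_mem _ rfl))]
  rw [hXw, symmToEnd_apply, hsymm]
  simp only [Matrix.cons_val_zero, Matrix.cons_val_one, Matrix.cons_val]
  module

lemma exists_dual_forall_symmToEnd_mem (W : Submodule ℝ (Module.End ℝ V4))
    (hsub : (W : Set (Module.End ℝ V4)) ⊆ S2P) (hdim : 2 ≤ finrank ℝ W) :
    ∃ φ : Module.Dual ℝ (Fin 3 → ℝ), ∀ v, φ v = 0 → symmToEnd v ∈ W := by
  have hmap : (W.comap symmToEnd).map symmToEnd = W :=
    Submodule.map_comap_eq_of_le fun X hX => mem_range_symmToEnd_of_mem_S2P (hsub hX)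
  have hle := Submodule.finrank_map_le symmToEnd (W.comap symmToEnd)
  rw [hmap] at hle
  obtain ⟨φ, hφ⟩ := (W.comap symmToEnd).exists_dual_ker_le (by rw [finrank_fin_fun]; omega)
  exact ⟨φ, fun v hv => hφ hv⟩

def pVec (c : ℕ → ℝ) (m : ℕ) : V4 := c (m + 1) • pp1 + c m • pp2

lemma qCoord_smul_pVec_add (c : ℕ → ℝ) (j : ℕ) (w : V4) :
    qCoord 0 w • pVec c (j + 1) + qCoord 1 w • pVec c j =
      symmToEnd ![c (j + 2), c (j + 1), c j] w := by
  simp only [qCoord, pVec, symmToEnd_apply, Matrix.cons_val_zero, Matrix.cons_val_one,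
    Matrix.cons_val, LinearMap.coe_proj, Function.eval]
  module

lemma inProl_binomialTensor (W : Submodule ℝ (Module.End ℝ V4)) (k : ℕ) (c : ℕ → ℝ)
    (hc : ∀ j ≤ k, symmToEnd ![c (j + 2), c (j + 1), c j] ∈ W) :
    InProl W k (binomialTensor qCoord (pVec c) (k + 1)) := by
  refine ⟨fun σ v => binomialTensor_comp_perm _ _ _ σ v, fun v => ?_⟩
  refine ⟨∑ s : Fin k → Fin 2, (∏ i, qCoord (s i) (v i)) •
    symmToEnd ![c (zeroCount s + 2), c (zeroCount s + 1), c (zeroCount s)],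
    W.sum_mem fun s _ => W.smul_mem _ (hc _ (zeroCount_le s)), fun w => ?_⟩
  simp [binomialTensor_snoc, qCoord_smul_pVec_add]

lemma eq_zero_of_binomialTensor_eq_zero {c : ℕ → ℝ} {n : ℕ}
    (h : binomialTensor qCoord (pVec c) n = 0) {j : ℕ} (hj : j ≤ n + 1) : c j = 0 := by
  have hvec {m : ℕ} (hm : m ≤ n) : pVec c m = 0 := by
    obtain ⟨s, rfl⟩ := exists_zeroCount_eq hm
    rw [← binomialTensor_apply_comp_of_dual qCoord (pVec c) qCoord_apply_qq, h]
    rfl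
  rcases j with _ | m
  · simpa [pVec, pp1, pp2] using congrFun (hvec (Nat.zero_le n)) 1
  · simpa [pVec, pp1, pp2] using congrFun (hvec (Nat.le_of_succ_le_succ hj)) 0

/-- every 2-dimensional linear subspace of `S²(P)` has infinite type. -/
theorem two_dim_subspace_of_S2P_infinite_type
    (W : Submodule ℝ (Module.End ℝ V4))
    (hsub : (W : Set (Module.End ℝ V4)) ⊆ S2P)
    (hdim : Module.finrank ℝ W = 2) :
    ¬ FiniteType (W : Set (Module.End ℝ V4)) := by
  rintro ⟨k, -, hk⟩
  obtain ⟨φ, hφ⟩ := exists_dual_forall_symmToEnd_mem W hsub hdim.ge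
  obtain ⟨c, ⟨j, hj, hcj⟩, hrec⟩ := exists_ne_zero_recurrence_solution φ k
  have hT := hk _ (inProl_binomialTensor W k c fun j hj => hφ _ (hrec j hj))
  exact hcj (eq_zero_of_binomialTensor_eq_zero hT hj)
end
end
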